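/- (Multi-index FRFT derivative formula) Let α ∈ ℝⁿ with no coordinate in πℤ and ς ∈ ℤ₊ⁿ a multi-index. For any Schwartz function f and x ∈ ℝⁿ, F_α(e_{-α}(y) ∂^ς[e_α(y)f(y)])(x) = (2πi x̃)^ς F_α(f)(x), where x̃ = (x₁ csc α₁,...,xₙ csc αₙ) and (2πi x̃)^ς = ∏ₖ (2πi x̃ₖ)^{ςₖ}. -/

import Mathlib

open MeasureTheory Real SchwartzMap Filter
open scoped FourierTransform

noncomputable section

abbrev Rn (n : ℕ) := EuclideanSpace ℝ (Fin n)

/-- The chirp function `e_α(x) = exp(2πi Σₖ (cot αₖ / 2) xₖ²)`. -/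
def chirp {n : ℕ} (α : Rn n) (x : Rn n) : ℂ :=
  Complex.exp (2 * (π : ℂ) * Complex.I *
    ((∑ k, Real.cot (α k) / 2 * (x k) ^ 2 : ℝ) : ℂ))

/-- The constant `c(α) = ∏ₖ √(1 - i cot αₖ)`. -/
def cConst {n : ℕ} (α : Rn n) : ℂ :=
  ∏ k, (1 - Complex.I * (Real.cot (α k) : ℂ)) ^ ((1 : ℂ) / 2)

/-- The FRFT kernel `K_α(x,u)`. -/
def frftKernel {n : ℕ} (α : Rn n) (x u : Rn n) : ℂ :=
  ∏ k, (1 - Complex.I * (Real.cot (α k) : ℂ)) ^ ((1 : ℂ) / 2) *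
    Complex.exp (2 * (π : ℂ) * Complex.I *
      ((Real.cot (α k) / 2 * ((x k) ^ 2 + (u k) ^ 2)
        - x k * u k / Real.sin (α k) : ℝ) : ℂ))

/-- The multidimensional fractional Fourier transform. -/
def frft {n : ℕ} (α : Rn n) (f : Rn n → ℂ) (u : Rn n) : ℂ :=
  ∫ x, f x * frftKernel α x u

/-- `ũ = (u₁ csc α₁, ..., uₙ csc αₙ)`. -/
def tilde {n : ℕ} (α u : Rn n) : Rn n :=
  (EuclideanSpace.equiv (Fin n) ℝ).symm fun k => u k / Real.sin (α k)

/-- `γ(β) = π^{n/2} 2^β Γ(β/2) / Γ((n-β)/2)`. -/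
def gammaC (n : ℕ) (β : ℝ) : ℝ :=
  π ^ ((n : ℝ) / 2) * 2 ^ β * Real.Gamma (β / 2) / Real.Gamma (((n : ℝ) - β) / 2)

/-- The classical Riesz potential `I_β`. -/
def rieszPot (n : ℕ) (β : ℝ) (f : Rn n → ℂ) (x : Rn n) : ℂ :=
  ((1 / gammaC n β : ℝ) : ℂ) * ∫ y, f y / ((‖x - y‖ ^ ((n : ℝ) - β) : ℝ) : ℂ)

/-- The fractional Riesz potential related to chirp functions `I_β^α`. -/
def rieszPotChirp {n : ℕ} (α : Rn n) (β : ℝ) (f : Rn n → ℂ) (x : Rn n) : ℂ :=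
  ((1 / gammaC n β : ℝ) : ℂ) * chirp (-α) x *
    ∫ y, f y * chirp α y / ((‖x - y‖ ^ ((n : ℝ) - β) : ℝ) : ℂ)

/-- `c_n = Γ((n+1)/2)/π^{(n+1)/2}`. -/
def nConst (n : ℕ) : ℝ := Real.Gamma (((n : ℝ) + 1) / 2) / π ^ (((n : ℝ) + 1) / 2)

/-- The j-th fractional Riesz transform related to chirp functions (principal value). -/
def rieszTransChirp {n : ℕ} (α : Rn n) (j : Fin n) (f : Rn n → ℂ) (x : Rn n) : ℂ :=
  ((nConst n : ℝ) : ℂ) * chirp (-α) x *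
    limUnder (nhdsWithin (0 : ℝ) (Set.Ioi 0)) fun ε =>
      ∫ y in {y : Rn n | ε < dist x y},
        (((x j - y j) / ‖x - y‖ ^ ((n : ℝ) + 1) : ℝ) : ℂ) * f y * chirp α y

/-- Partial derivative in the k-th coordinate direction. -/
def partialD {n : ℕ} (k : Fin n) (g : Rn n → ℂ) (y : Rn n) : ℂ :=
  fderiv ℝ g y (EuclideanSpace.single k 1)

/-- `α` has no coordinate in `πℤ`. -/
def notPiZ {n : ℕ} (α : Rn n) : Prop := ∀ k, ∀ m : ℤ, α k ≠ m * π

/-- Iterated multi-index partial derivative `∂^ς`. -/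
def multiPartial {n : ℕ} (ς : Fin n → ℕ) (g : Rn n → ℂ) : Rn n → ℂ :=
  (List.finRange n).foldr (fun k h => (partialD k)^[ς k] h) g

/-!
Multiplying by the chirp `e_α` conjugates `∂ₖ` into `g ↦ ∂ₖ g + 2πi cot(αₖ) yₖ g`, an operator
that preserves Schwartz space. Hence `∂^ς (e_α f) = e_α g` with `g` Schwartz, and since `e_α`
is unimodular, `e_α g` is integrable with integrable derivative, so under the Fourier transform
each `∂ₖ` becomes multiplication by `2πi ξₖ`. As `F_α h (x) = c(α) e_α(x) 𝓕(e_α h)(x̃)` and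
`e_α e_{-α} = 1`, evaluating at `ξ = x̃` gives the formula.
-/

open Complex ContinuousLinearMap
open scoped RealInnerProductSpace

theorem List.foldr_iterate_semiconj {ι X Y : Type*} (M : X → Y) {S : ι → X → X}
    {D : ι → Y → Y} (h : ∀ i, Function.Semiconj M (S i) (D i)) (m : ι → ℕ) (l : List ι)
    (x : X) :
    M (l.foldr (fun i y => (S i)^[m i] y) x) = l.foldr (fun i y => (D i)^[m i] y) (M x) := by
  induction l with
  | nil => rfl
  | cons i l ih => simp only [List.foldr_cons, ((h i).iterate_right (m i)).eq, ih]

theorem List.foldr_iterate_mul_left {ι M : Type*} [Monoid M] (c : ι → M) (m : ι → ℕ)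
    (l : List ι) (z : M) :
    l.foldr (fun i y => (c i * ·)^[m i] y) z = (l.map fun i => c i ^ m i).prod * z := by
  induction l with
  | nil => simp
  | cons i l ih =>
    rw [List.foldr_cons, mul_left_iterate_apply, ih, List.map_cons, List.prod_cons, mul_assoc]

section TwistedDerivative

variable {V : Type*} [NormedAddCommGroup V] [InnerProductSpace ℝ V]

theorem Real.fourier_fderiv_apply [FiniteDimensional ℝ V] [MeasurableSpace V] [BorelSpace V]
    {E : Type*} [NormedAddCommGroup E] [NormedSpace ℂ E] {F : V → E} (hF : Integrable F) (hFd : Differentiable ℝ F)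
    (hF' : Integrable (fderiv ℝ F)) (v ξ : V) :
    𝓕 (fun y => fderiv ℝ F y v) ξ = (2 * π * I * ⟪ξ, v⟫) • 𝓕 F ξ := by
  rw [← Real.fourier_continuousLinearMap_apply hF', Real.fourier_fderiv hF hFd hF']
  simp only [VectorFourier.fourierSMulRight_apply, neg_apply, innerSL_apply_apply ℝ, neg_smul,
    smul_neg, neg_neg]
  rw [← Complex.coe_smul, smul_smul, real_inner_comm]

/-- If `Du = u • L`, then `D (u g) = u • twistedFDerivCLM L g`. -/
def twistedFDerivCLM (L : V →L[ℝ] V →L[ℝ] ℂ) : 𝓢(V, ℂ) →L[ℝ] 𝓢(V, V →L[ℝ] ℂ) :=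
  fderivCLM ℝ V ℂ + bilinLeftCLM (lsmul ℝ ℂ) L.hasTemperateGrowth

def twistedLineDerivCLM (L : V →L[ℝ] V →L[ℝ] ℂ) (v : V) : 𝓢(V, ℂ) →L[ℝ] 𝓢(V, ℂ) :=
  (SchwartzMap.evalCLM ℝ V ℂ v).comp (twistedFDerivCLM L)

theorem twistedFDerivCLM_apply (L : V →L[ℝ] V →L[ℝ] ℂ) (g : 𝓢(V, ℂ)) (x : V) :
    twistedFDerivCLM L g x = fderiv ℝ g x + g x • L x := rfl

theorem twistedLineDerivCLM_apply (L : V →L[ℝ] V →L[ℝ] ℂ) (v : V) (g : 𝓢(V, ℂ)) (x : V) :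
    twistedLineDerivCLM L v g x = twistedFDerivCLM L g x v := rfl

theorem integrable_smul_schwartz [FiniteDimensional ℝ V] [MeasurableSpace V] [BorelSpace V]
    {E : Type*} [NormedAddCommGroup E] [NormedSpace ℂ E] {u : V → ℂ} (hu : Continuous u) (hu_le : ∀ x, ‖u x‖ ≤ 1) (g : 𝓢(V, E)) :
    Integrable (fun x => u x • g x) :=
  g.integrable.bdd_smul 1 hu.aestronglyMeasurable (.of_forall hu_le)

variable {u : V → ℂ} {L : V →L[ℝ] V →L[ℝ] ℂ}

theorem hasFDerivAt_mul_schwartz (hu : ∀ x, HasFDerivAt u (u x • L x) x) (g : 𝓢(V, ℂ))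
    (x : V) : HasFDerivAt (fun y => u y * g y) (u x • twistedFDerivCLM L g x) x := by
  refine ((hu x).mul g.differentiableAt.hasFDerivAt).congr_fderiv ?_
  rw [twistedFDerivCLM_apply, smul_add, smul_comm (u x) (g x)]

theorem fderiv_mul_schwartz_apply (hu : ∀ x, HasFDerivAt u (u x • L x) x) (g : 𝓢(V, ℂ))
    (v y : V) : fderiv ℝ (fun z => u z * g z) y v = u y * twistedLineDerivCLM L v g y := by
  rw [(hasFDerivAt_mul_schwartz hu g y).fderiv, smul_apply, smul_eq_mul,
    twistedLineDerivCLM_apply]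

theorem fourier_mul_twistedLineDerivCLM [FiniteDimensional ℝ V] [MeasurableSpace V]
    [BorelSpace V] (hu : ∀ x, HasFDerivAt u (u x • L x) x) (hu_norm : ∀ x, ‖u x‖ = 1) (g : 𝓢(V, ℂ)) (v ξ : V) :
    𝓕 (fun y => u y * twistedLineDerivCLM L v g y) ξ
      = 2 * π * I * ⟪ξ, v⟫ * 𝓕 (fun y => u y * g y) ξ := by
  have hu_cont : Continuous u := continuous_iff_continuousAt.2 fun x => (hu x).continuousAt
  have hu_le : ∀ x, ‖u x‖ ≤ 1 := fun x => (hu_norm x).le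
  have hint : Integrable (fun z => u z * g z) := integrable_smul_schwartz hu_cont hu_le g
  have hdiff : Differentiable ℝ (fun z => u z * g z) := fun y =>
    (hasFDerivAt_mul_schwartz hu g y).differentiableAt
  have hint_fderiv : Integrable (fderiv ℝ (fun z => u z * g z)) := by
    rw [funext fun y => (hasFDerivAt_mul_schwartz hu g y).fderiv]
    exact integrable_smul_schwartz hu_cont hu_le _
  simp_rw [← fderiv_mul_schwartz_apply hu, Real.fourier_fderiv_apply hint hdiff hint_fderiv,
    smul_eq_mul]

end TwistedDerivative

theorem Real.cot_neg (x : ℝ) : Real.cot (-x) = -Real.cot x := by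
  rw [Real.cot_eq_cos_div_sin, Real.cot_eq_cos_div_sin, Real.cos_neg, Real.sin_neg, div_neg]

section Chirp

variable {n : ℕ}

theorem chirp_mul_chirp_neg (α y : Rn n) : chirp α y * chirp (-α) y = 1 := by
  simp only [chirp, ← Complex.exp_add, PiLp.neg_apply, Real.cot_neg, neg_div, neg_mul,
    Finset.sum_neg_distrib, ofReal_neg, mul_neg, add_neg_cancel, Complex.exp_zero]

theorem norm_chirp (α y : Rn n) : ‖chirp α y‖ = 1 := by
  rw [chirp, ← norm_exp_I_mul_ofReal (2 * π * ∑ k, Real.cot (α k) / 2 * y k ^ 2),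
    ofReal_mul, ofReal_mul, ofReal_ofNat, mul_comm I, mul_assoc]
  congr 2
  ring

def chirpLogDeriv (α : Rn n) : Rn n →L[ℝ] Rn n →L[ℝ] ℂ :=
  ∑ k, (2 * π * I * Real.cot (α k)) •
    (EuclideanSpace.proj k).smulRight ((EuclideanSpace.proj k).smulRight (1 : ℂ))

theorem chirpLogDeriv_apply (α x v : Rn n) :
    chirpLogDeriv α x v = 2 * π * I * ∑ k, Real.cot (α k) * x k * v k := by
  simp [chirpLogDeriv, Finset.mul_sum, mul_assoc]

theorem hasFDerivAt_chirp (α x : Rn n) :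
    HasFDerivAt (chirp α) (chirp α x • chirpLogDeriv α x) x := by
  have hQ : HasFDerivAt (fun y : Rn n => ∑ k, Real.cot (α k) / 2 * y k ^ 2)
      (∑ k, (Real.cot (α k) * x k) • EuclideanSpace.proj (𝕜 := ℝ) k) x := by
    refine HasFDerivAt.fun_sum fun k _ => ?_
    have hk := (EuclideanSpace.proj (𝕜 := ℝ) k).hasFDerivAt (x := x)
    simp only [sq]
    refine ((hk.mul hk).const_mul (Real.cot (α k) / 2)).congr_fderiv ?_
    ext v
    simp only [PiLp.proj_apply, smul_add, add_apply, smul_apply, smul_eq_mul]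
    ring
  refine ((ofRealCLM.hasFDerivAt.comp x hQ).const_mul (2 * π * I : ℂ)).cexp.congr_fderiv ?_
  ext v
  simp only [smul_apply, chirpLogDeriv_apply, comp_apply, Function.comp_apply, ofRealCLM_apply,
    sum_apply, smul_eq_mul]
  rfl

def chirpMultiPartial (α : Rn n) (ς : Fin n → ℕ) (g : 𝓢(Rn n, ℂ)) : 𝓢(Rn n, ℂ) :=
  (List.finRange n).foldr
    (fun k h => (twistedLineDerivCLM (chirpLogDeriv α) (EuclideanSpace.single k 1))^[ς k] h) g

theorem multiPartial_chirp_mul (α : Rn n) (ς : Fin n → ℕ) (g : 𝓢(Rn n, ℂ)) :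
    multiPartial ς (fun z => chirp α z * g z)
      = fun y => chirp α y * chirpMultiPartial α ς g y := by
  have hstep : ∀ k, Function.Semiconj (fun (g : 𝓢(Rn n, ℂ)) y => chirp α y * g y)
      (twistedLineDerivCLM (chirpLogDeriv α) (EuclideanSpace.single k 1)) (partialD k) :=
    fun k g => funext fun y => (fderiv_mul_schwartz_apply (hasFDerivAt_chirp α) g _ y).symm
  exact (List.foldr_iterate_semiconj _ hstep ς _ g).symm

theorem fourier_chirp_mul_chirpMultiPartial (α : Rn n) (ς : Fin n → ℕ) (g : 𝓢(Rn n, ℂ))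
    (ξ : Rn n) :
    𝓕 (fun y => chirp α y * chirpMultiPartial α ς g y) ξ
      = (∏ k, (2 * π * I * ξ k) ^ ς k) * 𝓕 (fun y => chirp α y * g y) ξ := by
  have hstep : ∀ k,
      Function.Semiconj (fun g : 𝓢(Rn n, ℂ) => 𝓕 (fun y => chirp α y * g y) ξ)
      (twistedLineDerivCLM (chirpLogDeriv α) (EuclideanSpace.single k 1))
      (2 * π * I * ξ k * ·) := fun k g => by
    dsimp only
    rw [fourier_mul_twistedLineDerivCLM (hasFDerivAt_chirp α) (norm_chirp α),
      EuclideanSpace.inner_single_right]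
    simp
  rw [chirpMultiPartial, List.foldr_iterate_semiconj _ hstep, List.foldr_iterate_mul_left,
    Fin.prod_univ_def]

theorem tilde_apply (α u : Rn n) (k : Fin n) : tilde α u k = u k / Real.sin (α k) := rfl

theorem frftKernel_eq (α y x : Rn n) :
    frftKernel α y x = cConst α * chirp α x *
      (Complex.exp (↑(-2 * π * ⟪y, tilde α x⟫) * I) * chirp α y) := by
  rw [frftKernel, Finset.prod_mul_distrib, cConst, mul_assoc, mul_assoc]
  congr 1
  rw [← Complex.exp_sum, chirp, chirp, ← Complex.exp_add, ← Complex.exp_add]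
  congr 1
  have hphase : ∑ k, (Real.cot (α k) / 2 * (y k ^ 2 + x k ^ 2) - y k * x k / Real.sin (α k))
      = ∑ k, Real.cot (α k) / 2 * x k ^ 2 - ⟪y, tilde α x⟫
        + ∑ k, Real.cot (α k) / 2 * y k ^ 2 := by
    simp only [PiLp.inner_apply, RCLike.inner_apply, conj_trivial, tilde_apply]
    rw [← Finset.sum_sub_distrib, ← Finset.sum_add_distrib]
    refine Finset.sum_congr rfl fun k _ => ?_
    ring
  rw [← Finset.mul_sum, ← Complex.ofReal_sum, hphase]
  push_cast
  ring

theorem frft_eq_fourier (α : Rn n) (g : Rn n → ℂ) (x : Rn n) :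
    frft α g x = cConst α * chirp α x * 𝓕 (fun y => chirp α y * g y) (tilde α x) := by
  rw [frft, Real.fourier_eq', ← integral_const_mul]
  congr 1 with y
  rw [frftKernel_eq, smul_eq_mul]
  ring

end Chirp

theorem frft_multi_derivative_general {n : ℕ} (α : Rn n) (ς : Fin n → ℕ)
    (f : 𝓢(Rn n, ℂ)) (x : Rn n) :
    frft α (fun y => chirp (-α) y * multiPartial ς (fun z => chirp α z * f z) y) x
      = (∏ k, (2 * (π : ℂ) * Complex.I * ((x k / Real.sin (α k) : ℝ) : ℂ)) ^ ς k) *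
          frft α (⇑f) x := by
  have hcancel : (fun y => chirp α y *
      (chirp (-α) y * multiPartial ς (fun z => chirp α z * f z) y))
      = fun y => chirp α y * chirpMultiPartial α ς f y := by
    rw [multiPartial_chirp_mul]
    funext y
    rw [← mul_assoc, ← mul_assoc, chirp_mul_chirp_neg, one_mul]
  rw [frft_eq_fourier, frft_eq_fourier, hcancel, fourier_chirp_mul_chirpMultiPartial]
  simp only [tilde_apply]
  ring

/-- multi-index FRFT derivative formula. -/
theorem frft_multi_derivative {n : ℕ} (α : Rn n) (hα : notPiZ α) (ς : Fin n → ℕ)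
    (f : 𝓢(Rn n, ℂ)) (x : Rn n) :
    frft α (fun y => chirp (-α) y * multiPartial ς (fun z => chirp α z * f z) y) x
      = (∏ k, (2 * (π : ℂ) * Complex.I * ((x k / Real.sin (α k) : ℝ) : ℂ)) ^ ς k) *
          frft α (⇑f) x :=
  frft_multi_derivative_general α ς f x
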